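/- Let Δt > 0 and ξ, Π, A, B, Π′ ∈ ℝ³ satisfy one step of the rigid-body midpoint integrator: d⁺(Δt,ξ,A) = Π, d⁺(Δt,ξ,B) = d⁻(Δt,ξ,A), and Π′ = d⁻(Δt,ξ,B). Let R be any 3×3 real matrix and let R′ := R · cay(Δtξ̂) · cay(Δtξ̂) be the reconstructed attitude after one step. Then the spatial angular momentum is conserved: R′ · Π′ = R · Π. (This is the discrete Noether theorem for the left SO(3)-invariance of the rigid body Hamiltonians.) -/

import Mathlib

open Matrix

noncomputable section

/-- The hat map: the 3×3 skew-symmetric matrix `ξ̂` with `ξ̂ v = ξ × v`. -/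
def hat (ξ : Fin 3 → ℝ) : Matrix (Fin 3) (Fin 3) ℝ :=
  !![0, -ξ 2, ξ 1; ξ 2, 0, -ξ 0; -ξ 1, ξ 0, 0]

/-- The Cayley transform `cay(hξ̂) = (I − (h/2)ξ̂)⁻¹ (I + (h/2)ξ̂)`. -/
def cay (h : ℝ) (ξ : Fin 3 → ℝ) : Matrix (Fin 3) (Fin 3) ℝ :=
  (1 - (h / 2) • hat ξ)⁻¹ * (1 + (h / 2) • hat ξ)

/-- `d⁺(h,ξ,Π) = Π + (h/2) ξ×Π − (h²/4)(ξ·Π)ξ`. -/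
def dplus (h : ℝ) (ξ Pv : Fin 3 → ℝ) : Fin 3 → ℝ :=
  Pv + (h / 2) • (ξ ⨯₃ Pv) - (h ^ 2 / 4 * (ξ ⬝ᵥ Pv)) • ξ

/-- `d⁻(h,ξ,Π) = Π − (h/2) ξ×Π − (h²/4)(ξ·Π)ξ`. -/
def dminus (h : ℝ) (ξ Pv : Fin 3 → ℝ) : Fin 3 → ℝ :=
  Pv - (h / 2) • (ξ ⨯₃ Pv) - (h ^ 2 / 4 * (ξ ⬝ᵥ Pv)) • ξ

/-!
With `S = (Δt/2) ξ̂`, the maps are `d± Π = Π ± S Π − c ξ` with `c = (Δt²/4)(ξ·Π)`, and since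
`S ξ = ξ × ξ = 0` both `(1 − S) d⁺ Π` and `(1 + S) d⁻ Π` equal `Π − S² Π − c ξ`. As `S` is
skew-symmetric, `1 − S` is invertible, so `cay(Δt ξ̂) d⁻ Π = d⁺ Π`. Applying this twice along the
step gives `cay² Π′ = cay d⁺ B = cay d⁻ A = d⁺ A = Π`, hence `R′ Π′ = R Π`.
-/

namespace Matrix

variable {n R : Type*} [Fintype n] [DecidableEq n]

theorem isUnit_one_sub_of_transpose_eq_neg [Field R] [LinearOrder R] [IsStrictOrderedRing R]
    {A : Matrix n n R} (hA : Aᵀ = -A) : IsUnit (1 - A) := by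
  refine mulVec_injective_iff_isUnit.mp <| (injective_iff_map_eq_zero' (1 - A).mulVecLin).mpr ?_
  intro v
  simp only [mulVecLin_apply, sub_mulVec, one_mulVec, sub_eq_zero]
  refine ⟨fun hv => ?_, fun hv => by simp [hv]⟩
  have hskew : v ⬝ᵥ A *ᵥ v = -(v ⬝ᵥ A *ᵥ v) := by
    calc v ⬝ᵥ A *ᵥ v = Aᵀ *ᵥ v ⬝ᵥ v := by rw [dotProduct_mulVec, mulVec_transpose]
      _ = -(v ⬝ᵥ A *ᵥ v) := by rw [hA, neg_mulVec, neg_dotProduct, dotProduct_comm]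
  have hself : v ⬝ᵥ v = 0 := by
    nth_rw 2 [hv]
    linarith
  exact dotProduct_self_eq_zero.mp hself

theorem one_sub_mulVec_add_eq_one_add_mulVec_sub [CommRing R] {S : Matrix n n R} {p w : n → R}
    (hw : S *ᵥ w = 0) :
    (1 - S) *ᵥ (p + S *ᵥ p - w) = (1 + S) *ᵥ (p - S *ᵥ p - w) := by
  simp only [sub_mulVec, add_mulVec, mulVec_add, mulVec_sub, one_mulVec, hw]
  abel

theorem inv_mul_mulVec_eq_of_mulVec_eq [CommRing R] {M N : Matrix n n R} {x y : n → R}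
    (hM : IsUnit M.det) (h : M *ᵥ y = N *ᵥ x) : (M⁻¹ * N) *ᵥ x = y := by
  rw [← mulVec_mulVec, ← h, mulVec_mulVec, nonsing_inv_mul _ hM, one_mulVec]

end Matrix

theorem hat_mulVec (ξ v : Fin 3 → ℝ) : hat ξ *ᵥ v = ξ ⨯₃ v := by
  ext i; fin_cases i <;> simp [hat, cross_apply, mulVec, dotProduct, Fin.sum_univ_three] <;> ring

theorem hat_transpose (ξ : Fin 3 → ℝ) : (hat ξ)ᵀ = -hat ξ := by
  ext i j; fin_cases i <;> fin_cases j <;> simp [hat]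

theorem dplus_eq (h : ℝ) (ξ P : Fin 3 → ℝ) :
    dplus h ξ P = P + ((h / 2) • hat ξ) *ᵥ P - (h ^ 2 / 4 * (ξ ⬝ᵥ P)) • ξ := by
  rw [dplus, smul_mulVec, hat_mulVec]

theorem dminus_eq (h : ℝ) (ξ P : Fin 3 → ℝ) :
    dminus h ξ P = P - ((h / 2) • hat ξ) *ᵥ P - (h ^ 2 / 4 * (ξ ⬝ᵥ P)) • ξ := by
  rw [dminus, smul_mulVec, hat_mulVec]

theorem cay_mulVec_dminus (h : ℝ) (ξ P : Fin 3 → ℝ) : cay h ξ *ᵥ dminus h ξ P = dplus h ξ P := by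
  have hdet : IsUnit (1 - (h / 2) • hat ξ).det := by
    rw [← isUnit_iff_isUnit_det]
    exact isUnit_one_sub_of_transpose_eq_neg (by rw [transpose_smul, hat_transpose, smul_neg])
  refine inv_mul_mulVec_eq_of_mulVec_eq hdet ?_
  rw [dplus_eq, dminus_eq]
  refine one_sub_mulVec_add_eq_one_add_mulVec_sub ?_
  rw [mulVec_smul, smul_mulVec, hat_mulVec, cross_self, smul_zero, smul_zero]

theorem midpoint_step_conserves_spatial_momentum_general
    (Δt : ℝ) (ξ Pv A B Pv' : Fin 3 → ℝ)
    (h1 : dplus Δt ξ A = Pv)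
    (h2 : dplus Δt ξ B = dminus Δt ξ A)
    (h3 : Pv' = dminus Δt ξ B)
    (R R' : Matrix (Fin 3) (Fin 3) ℝ)
    (hR' : R' = R * cay Δt ξ * cay Δt ξ) :
    R'.mulVec Pv' = R.mulVec Pv := by
  subst hR' h3 h1
  rw [← mulVec_mulVec, ← mulVec_mulVec, cay_mulVec_dminus, h2, cay_mulVec_dminus]

/-- Discrete Noether theorem for the left `SO(3)`-invariance of the rigid body Hamiltonians:
one step of the rigid-body stochastic variational midpoint integrator, together with the
attitude reconstruction `R′ = R · cay(Δtξ̂) · cay(Δtξ̂)`, conserves the spatial angular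
momentum: `R′ Π′ = R Π`. -/
theorem midpoint_step_conserves_spatial_momentum
    (Δt : ℝ) (hΔt : 0 < Δt) (ξ Pv A B Pv' : Fin 3 → ℝ)
    (h1 : dplus Δt ξ A = Pv)
    (h2 : dplus Δt ξ B = dminus Δt ξ A)
    (h3 : Pv' = dminus Δt ξ B)
    (R R' : Matrix (Fin 3) (Fin 3) ℝ)
    (hR' : R' = R * cay Δt ξ * cay Δt ξ) :
    R'.mulVec Pv' = R.mulVec Pv :=
  midpoint_step_conserves_spatial_momentum_general Δt ξ Pv A B Pv' h1 h2 h3 R R' hR'
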